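/- Let W ⊆ S^d V be a linear series of homogeneous forms of degree d (V an n-dimensional ℂ-vector space). The apolar ideal W^⊥ has a minimal generator of degree d + 1 if and only if there exists a nonzero homogeneous form G of degree d + 1 with T_1 ⌟ G ⊆ W, i.e. α ⌟ G ∈ W for every linear form α ∈ T_1 (the first prolongation of W is nonzero). -/

import Mathlib

/-!
Apolarity setup.  `S = ℂ[x_1,…,x_n]` and its dual ring `T = ℂ[α_1,…,α_n]` are both
realized as `MvPolynomial (Fin n) ℂ`; the apolarity action `Θ ⌟ F` (`contract Θ F`)
lets `α_i` act as the partial differentiation operator `∂/∂x_i`.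
-/

open MvPolynomial

noncomputable section Apolarity

/-- Partial derivatives on `ℂ[x_1,…,x_n]` commute. -/
lemma pderiv_pderiv_comm (n : ℕ) (i j : Fin n) (f : MvPolynomial (Fin n) ℂ) :
    pderiv i (pderiv j f) = pderiv j (pderiv i f) := by
  induction f using MvPolynomial.induction_on with
  | C a => simp
  | add p q hp hq => simp [hp, hq]
  | mul_X p k hp =>
    rcases eq_or_ne i k with rfl | hik
    · rcases eq_or_ne j i with rfl | hjk
      · rfl
      · simp only [pderiv_mul, pderiv_X_self, pderiv_X_of_ne hjk, pderiv_X_of_ne hjk.symm,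
          map_add, map_zero, map_one, Derivation.map_one_eq_zero, mul_one, mul_zero,
          add_zero, zero_add, hp]
    · rcases eq_or_ne j k with rfl | hjk
      · simp only [pderiv_mul, pderiv_X_self, pderiv_X_of_ne hik, pderiv_X_of_ne hik.symm,
          map_add, map_zero, map_one, Derivation.map_one_eq_zero, mul_one, mul_zero,
          add_zero, zero_add, hp]
      · simp only [pderiv_mul, pderiv_X_of_ne hik.symm, pderiv_X_of_ne hjk.symm, map_add,
          map_zero, mul_zero, add_zero, zero_add, hp]

variable (n : ℕ)

/-- The endomorphism `∂/∂x_i` of `S = ℂ[x_1,…,x_n]`. -/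
def derOp (i : Fin n) : Module.End ℂ (MvPolynomial (Fin n) ℂ) :=
  (pderiv i).toLinearMap

lemma derOp_commute (i j : Fin n) : Commute (derOp n i) (derOp n j) :=
  LinearMap.ext fun f => pderiv_pderiv_comm n i j f

/-- The commuting product of the operators `(∂/∂x_i)^(m i)`. -/
def piDiffHom : (Fin n → Multiplicative ℕ) →* Module.End ℂ (MvPolynomial (Fin n) ℂ) :=
  MonoidHom.noncommPiCoprod (fun i : Fin n => powersHom _ (derOp n i))
    (fun i j _ x y => ((derOp_commute n i j).pow_pow x y))

/-- The differential operator `∏ i, (∂/∂x_i)^(m i)` attached to an exponent vector `m`. -/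
def diffMonoidHom : Multiplicative (Fin n →₀ ℕ) →* Module.End ℂ (MvPolynomial (Fin n) ℂ) :=
  (piDiffHom n).comp
    (AddMonoidHom.toMultiplicative
      (Finsupp.coeFnAddHom : (Fin n →₀ ℕ) →+ (Fin n → ℕ)))

/-- The apolarity action of the dual ring `T = ℂ[α_1,…,α_n]` on `S = ℂ[x_1,…,x_n]`, as an
algebra homomorphism to differential operators: `α_i` acts as `∂/∂x_i`. -/
def apolarAlgHom :
    MvPolynomial (Fin n) ℂ →ₐ[ℂ] Module.End ℂ (MvPolynomial (Fin n) ℂ) :=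
  AddMonoidAlgebra.lift ℂ _ (Fin n →₀ ℕ) (diffMonoidHom n)

variable {n}

/-- The apolarity action `Θ ⌟ F`: apply to `F` the differential operator obtained from `Θ`
by substituting `∂/∂x_i` for the `i`-th (dual) variable. -/
def contract (Θ F : MvPolynomial (Fin n) ℂ) : MvPolynomial (Fin n) ℂ :=
  apolarAlgHom n Θ F

lemma apolarAlgHom_X (i : Fin n) : apolarAlgHom n (X i) = derOp n i := by
  classical
  have hX : (X i : MvPolynomial (Fin n) ℂ)
      = AddMonoidAlgebra.single (Finsupp.single i 1) (1 : ℂ) := rfl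
  rw [hX]
  rw [show apolarAlgHom n (AddMonoidAlgebra.single (Finsupp.single i 1) (1:ℂ))
      = (1:ℂ) • diffMonoidHom n (Multiplicative.ofAdd (Finsupp.single i 1)) from
    AddMonoidAlgebra.lift_single _ _ _]
  rw [one_smul]
  rw [diffMonoidHom]
  change piDiffHom n ((AddMonoidHom.toMultiplicative
    (Finsupp.coeFnAddHom : (Fin n →₀ ℕ) →+ (Fin n → ℕ)))
    (Multiplicative.ofAdd (Finsupp.single i 1))) = derOp n i
  have harg : (AddMonoidHom.toMultiplicative
        (Finsupp.coeFnAddHom : (Fin n →₀ ℕ) →+ (Fin n → ℕ)))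
        (Multiplicative.ofAdd (Finsupp.single i 1))
      = Pi.mulSingle (M := fun _ : Fin n => Multiplicative ℕ) i (Multiplicative.ofAdd 1) := by
    funext j
    rcases eq_or_ne j i with rfl | hj
    · show Multiplicative.ofAdd ((Finsupp.single j 1 : Fin n →₀ ℕ) j)
        = Pi.mulSingle (M := fun _ : Fin n => Multiplicative ℕ) j (Multiplicative.ofAdd 1) j
      rw [Finsupp.single_eq_same, Pi.mulSingle_eq_same]
    · show Multiplicative.ofAdd ((Finsupp.single i 1 : Fin n →₀ ℕ) j)
        = Pi.mulSingle (M := fun _ : Fin n => Multiplicative ℕ) i (Multiplicative.ofAdd 1) j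
      rw [Finsupp.single_eq_of_ne hj, Pi.mulSingle_eq_of_ne hj]
      exact ofAdd_zero
  refine (congrArg (piDiffHom n) harg).trans ?_
  rw [piDiffHom]
  refine (MonoidHom.noncommPiCoprod_mulSingle
    (ϕ := fun i : Fin n => powersHom _ (derOp n i)) (i := i) (y := Multiplicative.ofAdd 1)).trans ?_
  rfl

/-- Sanity check: the dual variable `α_i` acts on `F` as `∂F/∂x_i`. -/
@[simp] lemma contract_X (i : Fin n) (F : MvPolynomial (Fin n) ℂ) :
    contract (X i) F = pderiv i F := by
  rw [contract, apolarAlgHom_X]; rfl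

/-- The apolar (annihilator) ideal `F^⊥ = {Θ ∈ T : Θ ⌟ F = 0}` of a polynomial `F`. -/
def apolarIdeal (F : MvPolynomial (Fin n) ℂ) : Ideal (MvPolynomial (Fin n) ℂ) where
  carrier := {Θ | contract Θ F = 0}
  zero_mem' := by simp [contract]
  add_mem' := by
    intro a b ha hb
    simp only [Set.mem_setOf_eq, contract, map_add, LinearMap.add_apply] at *
    rw [ha, hb, add_zero]
  smul_mem' := by
    intro c x hx
    simp only [Set.mem_setOf_eq, smul_eq_mul, contract, map_mul, Module.End.mul_apply] at *
    rw [hx, map_zero]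

@[simp] lemma mem_apolarIdeal {Θ F : MvPolynomial (Fin n) ℂ} :
    Θ ∈ apolarIdeal F ↔ contract Θ F = 0 := Iff.rfl

variable (n)

/-- The irrelevant maximal ideal `m = ⟨α_1,…,α_n⟩` of `T`. -/
def irrIdeal : Ideal (MvPolynomial (Fin n) ℂ) :=
  Ideal.span (Set.range X)

variable {n}

/-- The homogeneous ideal `I` has a minimal generator of degree `k`, i.e. `(I/mI)_k ≠ 0`:
there is a homogeneous element of `I` of degree `k` not belonging to `m * I`. -/
def HasMinGenOfDegree (I : Ideal (MvPolynomial (Fin n) ℂ)) (k : ℕ) : Prop :=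
  ∃ Θ, Θ ∈ I ∧ Θ.IsHomogeneous k ∧ Θ ∉ irrIdeal n * I

/-- The homogeneous ideal `I` has at least `r` minimal generators of degree `k`, i.e.
`dim_ℂ (I/mI)_k ≥ r`: there are `r` homogeneous degree-`k` elements of `I` that are
linearly independent modulo `m * I`. -/
def MinGensAtLeast (I : Ideal (MvPolynomial (Fin n) ℂ)) (k r : ℕ) : Prop :=
  ∃ Θ : Fin r → MvPolynomial (Fin n) ℂ,
    (∀ i, Θ i ∈ I ∧ (Θ i).IsHomogeneous k) ∧
    ∀ c : Fin r → ℂ, (∑ i, c i • Θ i) ∈ irrIdeal n * I → ∀ i, c i = 0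

/-- `F` is an `s`-fold direct sum of degree `d`: `F = F_1 + ⋯ + F_s` where the `F_i` are
nonzero degree-`d` forms in independent subspaces `V_i` of the space of linear forms with
`V = V_1 ⊕ ⋯ ⊕ V_s` (i.e. in disjoint sets of variables, up to linear change of variables;
`F_i ∈ S^d V_i` is expressed as membership in the subalgebra generated by `V_i`). -/
def IsSFoldDirectSum (F : MvPolynomial (Fin n) ℂ) (d s : ℕ) : Prop :=
  ∃ (V : Fin s → Submodule ℂ (MvPolynomial (Fin n) ℂ))
    (G : Fin s → MvPolynomial (Fin n) ℂ),
    (∀ i, V i ≤ homogeneousSubmodule (Fin n) ℂ 1) ∧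
    iSupIndep V ∧
    (⨆ i, V i) = homogeneousSubmodule (Fin n) ℂ 1 ∧
    (∀ i, G i ≠ 0 ∧ (G i).IsHomogeneous d ∧ G i ∈ Algebra.adjoin ℂ (V i : Set _)) ∧
    F = ∑ i, G i

/-- `F` is a direct sum: `F = F₁ + F₂` with `F₁ ∈ S^d V₁`, `F₂ ∈ S^d V₂` nonzero and
`V = V₁ ⊕ V₂`. -/
def IsDirectSum (F : MvPolynomial (Fin n) ℂ) (d : ℕ) : Prop :=
  IsSFoldDirectSum F d 2

/-- `F` is a limit (as `t → 0`) of `s`-fold direct sums of degree `d`. -/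
def IsLimitOfSFoldDirectSums (F : MvPolynomial (Fin n) ℂ) (d s : ℕ) : Prop :=
  ∃ G : ℂ → MvPolynomial (Fin n) ℂ,
    (∀ t : ℂ, t ≠ 0 → IsSFoldDirectSum (G t) d s) ∧
    ∀ m : Fin n →₀ ℕ,
      Filter.Tendsto (fun t => MvPolynomial.coeff m (G t))
        (nhdsWithin (0 : ℂ) {(0 : ℂ)}ᶜ) (nhds (MvPolynomial.coeff m F))

/-- `F` is a limit of direct sums. -/
def IsLimitOfDirectSums (F : MvPolynomial (Fin n) ℂ) (d : ℕ) : Prop :=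
  IsLimitOfSFoldDirectSums F d 2

/-- `F` is concise: `(F^⊥)_1 = 0`, i.e. `F` cannot be written using fewer variables. -/
def Concise (F : MvPolynomial (Fin n) ℂ) : Prop :=
  ∀ Θ : MvPolynomial (Fin n) ℂ, Θ.IsHomogeneous 1 → contract Θ F = 0 → Θ = 0

end Apolarity

/-- The apolar ideal `W^⊥ = ⋂_{F ∈ W} F^⊥` of a linear series `W`. -/
noncomputable def seriesApolarIdeal {n : ℕ} (W : Submodule ℂ (MvPolynomial (Fin n) ℂ)) :
    Ideal (MvPolynomial (Fin n) ℂ) :=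
  ⨅ F ∈ W, apolarIdeal F

/-!
Every form of degree `d + 1` kills `W ⊆ S_d`, so `(W^⊥)_{d+1} = T_{d+1}`, while
`(m · W^⊥)_{d+1} = T₁ · (W^⊥)_d`. The apolarity pairing `T_k × S_k → ℂ` is perfect
(`dualForm` inverts it), and under it the annihilator of `T₁ · (W^⊥)_d` in `S_{d+1}` is
`{G | T₁ ⌟ G ⊆ ((W^⊥)_d)^⊥ = W}`. Hence `T₁ · (W^⊥)_d ≠ T_{d+1}` iff this space is
nonzero.
-/

section Contract

open Finsupp

variable {n : ℕ}

lemma contract_mul (a b F : MvPolynomial (Fin n) ℂ) :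
    contract (a * b) F = contract a (contract b F) := by
  simp only [contract, map_mul, Module.End.mul_apply]

lemma contract_one (F : MvPolynomial (Fin n) ℂ) : contract 1 F = F := by
  simp only [contract, map_one, Module.End.one_apply]

lemma contract_smul_left (c : ℂ) (Θ F : MvPolynomial (Fin n) ℂ) :
    contract (c • Θ) F = c • contract Θ F := by
  simp only [contract, map_smul, LinearMap.smul_apply]

lemma contract_sum_left {ι : Type*} (s : Finset ι) (Θ : ι → MvPolynomial (Fin n) ℂ)
    (F : MvPolynomial (Fin n) ℂ) :
    contract (∑ i ∈ s, Θ i) F = ∑ i ∈ s, contract (Θ i) F := by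
  simp only [contract, map_sum, LinearMap.sum_apply]

lemma contract_sum_right {ι : Type*} (Θ : MvPolynomial (Fin n) ℂ) (s : Finset ι)
    (F : ι → MvPolynomial (Fin n) ℂ) :
    contract Θ (∑ i ∈ s, F i) = ∑ i ∈ s, contract Θ (F i) :=
  map_sum (apolarAlgHom n Θ) F s

lemma contract_zero_right (Θ : MvPolynomial (Fin n) ℂ) : contract Θ 0 = 0 :=
  map_zero (apolarAlgHom n Θ)

lemma contract_X_pow_monomial (i : Fin n) (k : ℕ) (u : Fin n →₀ ℕ) (c : ℂ) :
    contract (X i ^ k) (monomial u c)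
      = monomial (u - single i k) (c * (u i).descFactorial k) := by
  induction k with
  | zero => simp [contract_one]
  | succ k ih =>
    rw [pow_succ', contract_mul, ih, contract_X, pderiv_monomial, tsub_apply, single_eq_same,
      tsub_tsub, ← single_add, Nat.descFactorial_succ]
    push_cast
    ring_nf

lemma contract_C (a : ℂ) (F : MvPolynomial (Fin n) ℂ) : contract (C a) F = a • F := by
  rw [C_eq_smul_one, contract_smul_left, contract_one]

lemma contract_monomial_monomial (m u : Fin n →₀ ℕ) (a c : ℂ) :
    contract (monomial m a) (monomial u c)
      = monomial (u - m) (a * c * m.prod fun i k => ((u i).descFactorial k : ℂ)) := by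
  induction m using Finsupp.induction with
  | zero => simp [contract_C, smul_monomial]
  | single_add i k m hi hk ih =>
    have him : m i = 0 := notMem_support_iff.mp hi
    rw [← one_mul a, ← monomial_mul, ← X_pow_eq_monomial, contract_mul, ih,
      contract_X_pow_monomial, tsub_apply, him, Nat.sub_zero, tsub_tsub, add_comm m,
      prod_add_index_of_disjoint (by simpa [support_single _ hk] using hi),
      prod_single_index (by simp)]
    ring_nf

def factorialProd (m : Fin n →₀ ℕ) : ℂ := m.prod fun _ k => (k.factorial : ℂ)

lemma factorialProd_ne_zero (m : Fin n →₀ ℕ) : factorialProd m ≠ 0 :=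
  Finset.prod_ne_zero_iff.mpr fun _ _ => Nat.cast_ne_zero.mpr (Nat.factorial_ne_zero _)

lemma contract_monomial_monomial_self (m : Fin n →₀ ℕ) (a c : ℂ) :
    contract (monomial m a) (monomial m c) = C (a * factorialProd m * c) := by
  have hprod : (m.prod fun i k => ((m i).descFactorial k : ℂ)) = factorialProd m :=
    prod_congr fun i _ => by rw [Nat.descFactorial_self]
  rw [contract_monomial_monomial, tsub_self, monomial_zero', hprod, mul_right_comm]

lemma eq_of_le_of_degree_le {m u : Fin n →₀ ℕ} (h : m ≤ u) (hd : u.degree ≤ m.degree) :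
    u = m := by
  obtain ⟨k, rfl⟩ := le_iff_exists_add.mp h
  rw [map_add] at hd
  rw [(degree_eq_zero_iff k).mp (by omega), add_zero]

lemma contract_monomial_monomial_of_not_le {m u : Fin n →₀ ℕ} (h : ¬m ≤ u) (a c : ℂ) :
    contract (monomial m a) (monomial u c) = 0 := by
  obtain ⟨i, hi⟩ : ∃ i, u i < m i := by simpa [le_def] using h
  rw [contract_monomial_monomial, Finsupp.prod,
    Finset.prod_eq_zero (Finsupp.mem_support_iff.mpr (by omega : m i ≠ 0))
      (by rw [Nat.descFactorial_eq_zero_iff_lt.mpr hi, Nat.cast_zero]),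
    mul_zero, monomial_zero]

lemma degree_eq_of_mem_support {F : MvPolynomial (Fin n) ℂ} {e : ℕ} (hF : F.IsHomogeneous e)
    {u : Fin n →₀ ℕ} (hu : u ∈ F.support) : u.degree = e := by
  rw [degree_eq_weight_one]
  exact hF (MvPolynomial.mem_support_iff.mp hu)

lemma contract_monomial_of_isHomogeneous {F : MvPolynomial (Fin n) ℂ} {e : ℕ}
    (hF : F.IsHomogeneous e) {m : Fin n →₀ ℕ} (hm : e ≤ m.degree) (a : ℂ) :
    contract (monomial m a) F = C (a * factorialProd m * coeff m F) := by
  conv_lhs => rw [F.as_sum, contract_sum_right]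
  rw [Finset.sum_eq_single m, contract_monomial_monomial_self]
  · intro u hu hne
    refine contract_monomial_monomial_of_not_le (fun hmu => hne ?_) _ _
    exact eq_of_le_of_degree_le hmu (by rw [degree_eq_of_mem_support hF hu]; exact hm)
  · intro hm
    rw [MvPolynomial.notMem_support_iff.mp hm, monomial_zero, contract_zero_right]

lemma contract_isHomogeneous {Θ F : MvPolynomial (Fin n) ℂ} {a b : ℕ}
    (hΘ : Θ.IsHomogeneous a) (hF : F.IsHomogeneous b) :
    (contract Θ F).IsHomogeneous (b - a) := by
  rw [Θ.as_sum, contract_sum_left]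
  refine IsHomogeneous.sum _ _ _ fun u hu => ?_
  rw [F.as_sum, contract_sum_right]
  refine IsHomogeneous.sum _ _ _ fun v hv => ?_
  by_cases huv : u ≤ v
  · rw [contract_monomial_monomial]
    refine isHomogeneous_monomial _ ?_
    rw [← degree_eq_of_mem_support hF hv, ← degree_eq_of_mem_support hΘ hu,
      ← tsub_add_cancel_of_le huv, map_add, add_tsub_cancel_right, add_tsub_cancel_right]
  · rw [contract_monomial_monomial_of_not_le huv]
    exact isHomogeneous_zero _ _ _

variable (n) in
def degreeMonomials (k : ℕ) : Finset (Fin n →₀ ℕ) := Finset.finsuppAntidiag Finset.univ k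

lemma mem_degreeMonomials {k : ℕ} {u : Fin n →₀ ℕ} :
    u ∈ degreeMonomials n k ↔ u.degree = k := by
  simp [degreeMonomials, degree_eq_sum]

lemma sum_degreeMonomials_monomial_coeff {F : MvPolynomial (Fin n) ℂ} {k : ℕ}
    (hF : F.IsHomogeneous k) : ∑ u ∈ degreeMonomials n k, monomial u (coeff u F) = F := by
  refine (Finset.sum_subset (fun u hu => ?_) fun u _ hu => ?_).symm.trans
    F.support_sum_monomial_coeff
  · exact mem_degreeMonomials.mpr (degree_eq_of_mem_support hF hu)
  · rw [MvPolynomial.notMem_support_iff.mp hu, monomial_zero]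

lemma contract_eq_C_sum {Θ F : MvPolynomial (Fin n) ℂ} {k e : ℕ} (hΘ : Θ.IsHomogeneous k)
    (hF : F.IsHomogeneous e) (hek : e ≤ k) :
    contract Θ F =
      C (∑ u ∈ degreeMonomials n k, coeff u Θ * factorialProd u * coeff u F) := by
  conv_lhs => rw [← sum_degreeMonomials_monomial_coeff hΘ, contract_sum_left]
  rw [map_sum]
  exact Finset.sum_congr rfl fun u hu =>
    contract_monomial_of_isHomogeneous hF (mem_degreeMonomials.mp hu ▸ hek) _

lemma contract_eq_zero_of_lt {Θ F : MvPolynomial (Fin n) ℂ} {k e : ℕ}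
    (hΘ : Θ.IsHomogeneous k) (hF : F.IsHomogeneous e) (hek : e < k) : contract Θ F = 0 := by
  rw [contract_eq_C_sum hΘ hF hek.le, C_eq_zero]
  refine Finset.sum_eq_zero fun u hu => ?_
  rw [hF.coeff_eq_zero (by rw [mem_degreeMonomials.mp hu]; omega), mul_zero]

lemma contract_comm_of_isHomogeneous {Θ F : MvPolynomial (Fin n) ℂ} {k : ℕ}
    (hΘ : Θ.IsHomogeneous k) (hF : F.IsHomogeneous k) : contract Θ F = contract F Θ := by
  rw [contract_eq_C_sum hΘ hF le_rfl, contract_eq_C_sum hF hΘ le_rfl]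
  congr 1
  exact Finset.sum_congr rfl fun u _ => by ring

/-- The degree-`k` form `G` with `Θ ⌟ G = f Θ` for every form `Θ` of degree `k`. -/
noncomputable def dualForm (k : ℕ) (f : Module.Dual ℂ (MvPolynomial (Fin n) ℂ)) :
    MvPolynomial (Fin n) ℂ :=
  ∑ u ∈ degreeMonomials n k, monomial u (f (monomial u 1) / factorialProd u)

lemma dualForm_isHomogeneous (k : ℕ) (f : Module.Dual ℂ (MvPolynomial (Fin n) ℂ)) :
    (dualForm k f).IsHomogeneous k :=
  IsHomogeneous.sum _ _ _ fun _ hu => isHomogeneous_monomial _ (mem_degreeMonomials.mp hu)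

lemma coeff_dualForm {k : ℕ} (f : Module.Dual ℂ (MvPolynomial (Fin n) ℂ))
    {u : Fin n →₀ ℕ} (hu : u.degree = k) :
    coeff u (dualForm k f) = f (monomial u 1) / factorialProd u := by
  simp only [dualForm, coeff_sum, coeff_monomial, Finset.sum_ite_eq',
    if_pos (mem_degreeMonomials.mpr hu)]

lemma contract_dualForm {k : ℕ} (f : Module.Dual ℂ (MvPolynomial (Fin n) ℂ))
    {Θ : MvPolynomial (Fin n) ℂ} (hΘ : Θ.IsHomogeneous k) :
    contract Θ (dualForm k f) = C (f Θ) := by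
  rw [contract_eq_C_sum hΘ (dualForm_isHomogeneous k f) le_rfl]
  conv_rhs => rw [← sum_degreeMonomials_monomial_coeff hΘ, map_sum]
  refine congrArg C (Finset.sum_congr rfl fun u hu => ?_)
  have hmon : monomial u (coeff u Θ) = coeff u Θ • monomial u (1 : ℂ) := by
    rw [smul_monomial, smul_eq_mul, mul_one]
  rw [coeff_dualForm f (mem_degreeMonomials.mp hu), hmon, map_smul, smul_eq_mul]
  field_simp [factorialProd_ne_zero u]

lemma dualForm_contract {k : ℕ} (f : Module.Dual ℂ (MvPolynomial (Fin n) ℂ))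
    {F : MvPolynomial (Fin n) ℂ} (hF : F.IsHomogeneous k) :
    contract (dualForm k f) F = C (f F) := by
  rw [contract_comm_of_isHomogeneous (dualForm_isHomogeneous k f) hF, contract_dualForm f hF]

end Contract

lemma Submodule.exists_dual_apply_ne_zero_of_notMem {K V : Type*} [Field K] [AddCommGroup V]
    [Module K V] {p : Submodule K V} {x : V} (hx : x ∉ p) :
    ∃ f : Module.Dual K V, f x ≠ 0 ∧ ∀ y ∈ p, f y = 0 := by
  obtain ⟨f, hfx, hf⟩ := p.exists_dual_map_eq_bot_of_notMem hx inferInstance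
  exact ⟨f, hfx, fun y hy => by simpa [hf] using Submodule.mem_map_of_mem (f := f) hy⟩

section SeriesApolarIdeal

variable {n : ℕ}

lemma mem_seriesApolarIdeal {W : Submodule ℂ (MvPolynomial (Fin n) ℂ)}
    {Θ : MvPolynomial (Fin n) ℂ} :
    Θ ∈ seriesApolarIdeal W ↔ ∀ F ∈ W, contract Θ F = 0 := by
  simp [seriesApolarIdeal]

lemma mem_seriesApolarIdeal_of_isHomogeneous_of_lt {W : Submodule ℂ (MvPolynomial (Fin n) ℂ)}
    {d k : ℕ} (hW : W ≤ homogeneousSubmodule (Fin n) ℂ d) {Θ : MvPolynomial (Fin n) ℂ}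
    (hΘ : Θ.IsHomogeneous k) (hdk : d < k) : Θ ∈ seriesApolarIdeal W :=
  mem_seriesApolarIdeal.mpr fun _ hF => contract_eq_zero_of_lt hΘ (hW hF) hdk

lemma exists_mem_seriesApolarIdeal_contract_ne_zero {W : Submodule ℂ (MvPolynomial (Fin n) ℂ)}
    {d : ℕ} (hW : W ≤ homogeneousSubmodule (Fin n) ℂ d) {F : MvPolynomial (Fin n) ℂ}
    (hF : F.IsHomogeneous d) (hFW : F ∉ W) :
    ∃ Θ ∈ seriesApolarIdeal W, Θ.IsHomogeneous d ∧ contract Θ F ≠ 0 := by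
  obtain ⟨g, hgF, hgW⟩ := Submodule.exists_dual_apply_ne_zero_of_notMem hFW
  refine ⟨dualForm d g, mem_seriesApolarIdeal.mpr fun F' hF' => ?_,
    dualForm_isHomogeneous d g, ?_⟩
  · rw [dualForm_contract g (hW hF'), hgW F' hF', map_zero]
  · rwa [dualForm_contract g hF, Ne, C_eq_zero]

lemma mem_irrIdeal_of_isHomogeneous_one {ℓ : MvPolynomial (Fin n) ℂ}
    (hℓ : ℓ.IsHomogeneous 1) : ℓ ∈ irrIdeal n := by
  rw [irrIdeal, ← Set.image_univ, mem_ideal_span_X_image]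
  intro u hu
  have hu0 : u ≠ 0 := fun h => by simpa [h] using degree_eq_of_mem_support hℓ hu
  obtain ⟨i, hi⟩ := Finsupp.ne_iff.mp hu0
  exact ⟨i, Set.mem_univ i, hi⟩

lemma irrIdeal_mul_le {I J : Ideal (MvPolynomial (Fin n) ℂ)}
    (h : ∀ i, ∀ b ∈ I, X i * b ∈ J) : irrIdeal n * I ≤ J :=
  Ideal.mul_le.mpr fun _ ha b hb => Submodule.mem_colon_singleton.mp <|
    Ideal.span_le.mpr (Set.range_subset_iff.mpr fun i =>
      Submodule.mem_colon_singleton.mpr (h i b hb)) ha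

end SeriesApolarIdeal

section Prolongation

variable {n d : ℕ} {W : Submodule ℂ (MvPolynomial (Fin n) ℂ)}

lemma hasMinGenOfDegree_succ_of_prolongation (hW : W ≤ homogeneousSubmodule (Fin n) ℂ d)
    {G : MvPolynomial (Fin n) ℂ} (hG0 : G ≠ 0) (hG : G.IsHomogeneous (d + 1))
    (hGW : ∀ i, contract (X i) G ∈ W) :
    HasMinGenOfDegree (seriesApolarIdeal W) (d + 1) := by
  obtain ⟨m, hm⟩ := support_nonempty.mpr hG0
  have hmdeg : m.degree = d + 1 := degree_eq_of_mem_support hG hm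
  have hΘ : (monomial m (1 : ℂ)).IsHomogeneous (d + 1) := isHomogeneous_monomial _ hmdeg
  refine ⟨monomial m 1, mem_seriesApolarIdeal_of_isHomogeneous_of_lt hW hΘ d.lt_succ_self, hΘ,
    fun hmem => ?_⟩
  have hle : irrIdeal n * seriesApolarIdeal W ≤ apolarIdeal G := irrIdeal_mul_le fun i b hb => by
    rw [mem_apolarIdeal, mul_comm, contract_mul]
    exact mem_seriesApolarIdeal.mp hb _ (hGW i)
  have hzero := mem_apolarIdeal.mp (hle hmem)
  rw [contract_monomial_of_isHomogeneous hG hmdeg.ge, C_eq_zero, one_mul] at hzero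
  exact mul_ne_zero (factorialProd_ne_zero m) (mem_support_iff.mp hm) hzero

lemma prolongation_of_hasMinGenOfDegree_succ (hW : W ≤ homogeneousSubmodule (Fin n) ℂ d)
    (h : HasMinGenOfDegree (seriesApolarIdeal W) (d + 1)) :
    ∃ G : MvPolynomial (Fin n) ℂ, G ≠ 0 ∧ G.IsHomogeneous (d + 1) ∧
      ∀ ℓ : MvPolynomial (Fin n) ℂ, ℓ.IsHomogeneous 1 → contract ℓ G ∈ W := by
  obtain ⟨Θ, -, hΘ, hΘm⟩ := h
  obtain ⟨f, hfΘ, hf⟩ := Submodule.exists_dual_apply_ne_zero_of_notMem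
    (p := (irrIdeal n * seriesApolarIdeal W).restrictScalars ℂ) hΘm
  refine ⟨dualForm (d + 1) f, fun h0 => hfΘ ?_, dualForm_isHomogeneous _ _, fun ℓ hℓ => ?_⟩
  · rw [← C_inj, ← contract_dualForm f hΘ, h0, contract_zero_right, map_zero]
  by_contra hℓW
  have hℓG : (contract ℓ (dualForm (d + 1) f)).IsHomogeneous d := by
    simpa using contract_isHomogeneous hℓ (dualForm_isHomogeneous (d + 1) f)
  obtain ⟨Θ', hΘ'W, hΘ', hne⟩ := exists_mem_seriesApolarIdeal_contract_ne_zero hW hℓG hℓW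
  have hmem : Θ' * ℓ ∈ irrIdeal n * seriesApolarIdeal W :=
    mul_comm ℓ Θ' ▸ Ideal.mul_mem_mul (mem_irrIdeal_of_isHomogeneous_one hℓ) hΘ'W
  apply hne
  rw [← contract_mul, contract_dualForm f (hΘ'.mul hℓ), hf _ hmem, map_zero]

end Prolongation

/-- For a linear series `W ⊆ S^d V`, the apolar ideal `W^⊥` has a
minimal generator of degree `d + 1` iff the first prolongation of `W` is nonzero: there is
a nonzero form `G` of degree `d + 1` with `T₁ ⌟ G ⊆ W`. -/
theorem linear_series_generator_degree_succ_iff_prolongation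
    (n d : ℕ) (W : Submodule ℂ (MvPolynomial (Fin n) ℂ))
    (hW : W ≤ homogeneousSubmodule (Fin n) ℂ d) :
    HasMinGenOfDegree (seriesApolarIdeal W) (d + 1) ↔
    ∃ G : MvPolynomial (Fin n) ℂ, G ≠ 0 ∧ G.IsHomogeneous (d + 1) ∧
      ∀ ℓ : MvPolynomial (Fin n) ℂ, ℓ.IsHomogeneous 1 → contract ℓ G ∈ W :=
  ⟨prolongation_of_hasMinGenOfDegree_succ hW, fun ⟨_, hG0, hG, hGW⟩ =>
    hasMinGenOfDegree_succ_of_prolongation hW hG0 hG fun i => hGW _ (isHomogeneous_X ℂ i)⟩
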